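/- arXiv:1812.10701 — 7 statements merged into one kernel-verified Lean document; each statement's English description precedes it below -/
import Mathlib

section
/- Let G be a 2-connected simple graph, let u and v be two distinct vertices of G, and let e = xy be an edge of G. Then there exists a path in G from u to v that contains the edge e. -/
/-!
Fix the edge `e = xy`. Call `v` good if every `u ≠ v` is joined to `v` by a path through `e`.
The vertex `x` is good: go from `u` to `y` avoiding `x`, then use `yx`. Goodness passes from a
vertex `w` to a neighbour `v`: take a path `P` from `u` to `w` through `e`. If `v ∉ P`, append
`wv`; if `e` lies on `P` before `v`, stop at `v`; otherwise `e` lies on the segment of `P` from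
`v` to `w`, which closes up with `wv` to a cycle, and a `u`–`w` path avoiding `v` reaches this
cycle at some `z ≠ v`, from which one of the two arcs leads to `v` through `e`. Since `G` is
connected, every vertex is good.
-/

open SimpleGraph

/-- A graph is 2-connected if it has at least 3 vertices and remains connected
after the deletion of any single vertex. -/
def SimpleGraph.TwoConnected {V : Type*} [Fintype V] (G : SimpleGraph V) : Prop :=
  3 ≤ Fintype.card V ∧ ∀ v : V, (G.induce {u | u ≠ v}).Connected

namespace SimpleGraph

variable {V : Type*} {G : SimpleGraph V}

def HasPathThrough (G : SimpleGraph V) (e : Sym2 V) (u v : V) : Prop :=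
  ∃ p : G.Walk u v, p.IsPath ∧ e ∈ p.edges

lemma HasPathThrough.symm {e : Sym2 V} {u v : V} (h : G.HasPathThrough e u v) :
    G.HasPathThrough e v u := by
  obtain ⟨p, hp, he⟩ := h
  exact ⟨p.reverse, hp.reverse, by simpa using he⟩

namespace Walk

lemma IsPath.append_of_support_inter {u z v : V} {p : G.Walk u z} {q : G.Walk z v}
    (hp : p.IsPath) (hq : q.IsPath) (h : ∀ t ∈ p.support, t ∈ q.support → t = z) :
    (p.append q).IsPath := by
  rw [isPath_def, support_append]
  refine hp.support_nodup.append hq.support_nodup.tail fun t htp htq => ?_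
  obtain rfl := h t htp (List.mem_of_mem_tail htq)
  have hnd := hq.support_nodup
  rw [← q.cons_tail_support, List.nodup_cons] at hnd
  exact hnd.1 htq

lemma IsPath.exists_isPath_first_mem {S : Set V} {a b : V} {p : G.Walk a b} (hp : p.IsPath)
    (hb : b ∈ S) : ∃ z ∈ S, ∃ q : G.Walk a z,
      q.IsPath ∧ q.support ⊆ p.support ∧ ∀ t ∈ q.support, t ∈ S → t = z := by
  induction p with
  | nil => exact ⟨_, hb, Walk.nil, .nil, by simp, by simp⟩
  | @cons a _ _ h p ih =>
    by_cases ha : a ∈ S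
    · exact ⟨a, ha, Walk.nil, .nil, by simp, by simp⟩
    obtain ⟨hp, hap⟩ := cons_isPath_iff h p |>.mp hp
    obtain ⟨z, hz, q, hq, hqp, hqS⟩ := ih hp hb
    refine ⟨z, hz, cons h q, hq.cons fun haq => hap (hqp haq), ?_, ?_⟩
    · simpa using List.subset_cons_of_subset _ hqp
    · simp only [support_cons, List.mem_cons, forall_eq_or_imp]
      exact ⟨fun h => absurd h ha, hqS⟩

end Walk

lemma exists_walk_avoiding {w a b : V} (h : (G.induce {t | t ≠ w}).Preconnected)
    (ha : a ≠ w) (hb : b ≠ w) : ∃ p : G.Walk a b, w ∉ p.support := by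
  obtain ⟨p⟩ := h ⟨a, ha⟩ ⟨b, hb⟩
  refine ⟨p.map (Embedding.induce _).toHom, fun hw => ?_⟩
  obtain ⟨t, -, ht⟩ := List.mem_map.mp (Walk.support_map _ p ▸ hw)
  exact t.2 ht

lemma hasPathThrough_of_isPath_of_adj {e : Sym2 V} {u v w : V} {Q : G.Walk v w}
    (hQ : Q.IsPath) (he : e ∈ Q.edges) (hwv : G.Adj w v) (R : G.Walk u w)
    (hvR : v ∉ R.support) : G.HasPathThrough e u v := by
  classical
  obtain ⟨z, hzQ, R', hR', hR'R, hR'Q⟩ :=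
    R.toPath.2.exists_isPath_first_mem (S := {t | t ∈ Q.support}) Q.end_mem_support
  have hvR' : v ∉ R'.support := fun h => hvR (R.support_toPath_subset_support (hR'R h))
  have hzv : z ≠ v := fun h => hvR' (h ▸ R'.end_mem_support)
  obtain ⟨Q₁, Q₂, hQ₁, hQ₂, rfl⟩ := hQ.mem_support_iff_exists_append.mp hzQ
  rw [Walk.edges_append, List.mem_append] at he
  rcases he with he | he
  · refine ⟨R'.append Q₁.reverse, hR'.append_of_support_inter hQ₁.reverse
      fun t ht htQ => hR'Q t ht ?_, by simp [he]⟩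
    simp_all [Walk.mem_support_append_iff]
  · have hvQ₂ : v ∉ Q₂.support := fun h =>
      hQ.ne_of_mem_support_of_append hzv.symm Q₁.start_mem_support h rfl
    refine ⟨R'.append (Q₂.concat hwv), hR'.append_of_support_inter (hQ₂.concat hvQ₂ hwv)
      fun t ht htQ => ?_, by simp [he]⟩
    rw [Walk.support_concat, List.mem_append, List.mem_singleton] at htQ
    rcases htQ with htQ | rfl
    · exact hR'Q t ht (by simp [Walk.mem_support_append_iff, htQ])
    · exact absurd ht hvR'

lemma HasPathThrough.of_adj {e : Sym2 V} {u v w : V} (hP : G.HasPathThrough e u w)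
    (hwv : G.Adj w v) (R : G.Walk u w) (hvR : v ∉ R.support) : G.HasPathThrough e u v := by
  classical
  obtain ⟨P, hP, he⟩ := hP
  by_cases hvP : v ∈ P.support
  · rw [← P.take_spec hvP, Walk.edges_append, List.mem_append] at he
    rcases he with he | he
    · exact ⟨_, hP.takeUntil hvP, he⟩
    · exact hasPathThrough_of_isPath_of_adj (hP.dropUntil hvP) he hwv R hvR
  · exact ⟨P.concat hwv, hP.concat hvP hwv, by simp [he]⟩

lemma forall_hasPathThrough_of_adj (h2 : ∀ w, (G.induce {t | t ≠ w}).Preconnected)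
    {e : Sym2 V} {v w : V} (hw : ∀ u ≠ w, G.HasPathThrough e u w) (hwv : G.Adj w v) :
    ∀ u ≠ v, G.HasPathThrough e u v := by
  intro u huv
  by_cases huw : u = w
  · exact huw ▸ (hw v (G.ne_of_adj hwv).symm).symm
  obtain ⟨R, hvR⟩ := exists_walk_avoiding (h2 v) huv (G.ne_of_adj hwv)
  exact (hw u huw).of_adj hwv R hvR

lemma forall_hasPathThrough_of_walk (h2 : ∀ w, (G.induce {t | t ≠ w}).Preconnected)
    {e : Sym2 V} {v w : V} (hw : ∀ u ≠ w, G.HasPathThrough e u w) (p : G.Walk v w) :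
    ∀ u ≠ v, G.HasPathThrough e u v := by
  induction p with
  | nil => exact hw
  | cons hvw _ ih => exact forall_hasPathThrough_of_adj h2 (ih hw) hvw.symm

lemma forall_hasPathThrough_edge (h2 : ∀ w, (G.induce {t | t ≠ w}).Preconnected)
    {x y : V} (hxy : G.Adj x y) : ∀ u ≠ x, G.HasPathThrough s(x, y) u x := by
  classical
  intro u hux
  obtain ⟨R, hxR⟩ := exists_walk_avoiding (h2 x) hux (G.ne_of_adj hxy).symm
  exact ⟨R.toPath.1.concat hxy.symm,
    R.toPath.2.concat (fun h => hxR (R.support_toPath_subset_support h)) hxy.symm, by simp⟩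

lemma preconnected_of_adj (h2 : ∀ w, (G.induce {t | t ≠ w}).Preconnected) {x y : V}
    (hxy : G.Adj x y) : G.Preconnected := by
  have reach (v : V) : G.Reachable v x := by
    by_cases hvx : v = x
    · exact hvx ▸ .rfl
    obtain ⟨R, -⟩ := exists_walk_avoiding (h2 x) hvx (G.ne_of_adj hxy).symm
    exact ⟨R.concat hxy.symm⟩
  exact fun a b => (reach a).trans (reach b).symm

lemma hasPathThrough_of_ne (h2 : ∀ w, (G.induce {t | t ≠ w}).Preconnected) {x y : V}
    (hxy : G.Adj x y) {u v : V} (huv : u ≠ v) : G.HasPathThrough s(x, y) u v := by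
  obtain ⟨p⟩ := preconnected_of_adj h2 hxy v x
  exact forall_hasPathThrough_of_walk h2 (forall_hasPathThrough_edge h2 hxy) p u huv

end SimpleGraph

/-- In a 2-connected graph, for any two distinct vertices `u, v` and any edge `xy`,
there is a `u`-`v` path containing the edge `xy`. -/
theorem stmt_0 {V : Type*} [Fintype V] (G : SimpleGraph V) (hG : G.TwoConnected)
    (u v x y : V) (huv : u ≠ v) (hxy : G.Adj x y) :
    ∃ p : G.Walk u v, p.IsPath ∧ s(x, y) ∈ p.edges :=
  hasPathThrough_of_ne (fun w => (hG.2 w).preconnected) hxy huv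
end

section
/- For every integer n ≥ 2, the conflict-free connection number of the path P_n on n vertices equals ⌈log₂ n⌉. -/
open SimpleGraph

/-- An edge-coloring `c` with `k` colors makes `G` conflict-free connected if every two
distinct vertices are joined by a path on which some color appears on exactly one edge. -/
def SimpleGraph.IsCFCColoring {V : Type*} (G : SimpleGraph V) {k : ℕ}
    (c : Sym2 V → Fin k) : Prop :=
  ∀ u v : V, u ≠ v → ∃ p : G.Walk u v, p.IsPath ∧
    ∃ col : Fin k, (p.edges.map c).count col = 1

/-- The conflict-free connection number of `G`: the smallest number of colors in an
edge-coloring of `G` that makes `G` conflict-free connected. -/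
noncomputable def SimpleGraph.cfc {V : Type*} (G : SimpleGraph V) : ℕ :=
  sInf {k | ∃ c : Sym2 V → Fin k, G.IsCFCColoring c}

/-!
If every sub-path of a path carries a colour used exactly once, then the edge carrying the
unique colour of the whole path splits it into two shorter paths that avoid that colour, so by
induction a path coloured with `k` colours has fewer than `2 ^ k` edges. Since `P_n` is a tree,
its unique path between two vertices must be conflict-free, which gives `n ≤ 2 ^ cfc(P_n)`.
Conversely, colour the edge `{i - 1, i}` by the `2`-adic valuation of `i`: every interval of
positive integers has exactly one element of maximal `2`-adic valuation, and these valuations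
stay below `⌈log₂ n⌉`.
-/

namespace List

variable {α : Type*} [DecidableEq α]

def IsConflictFree (l : List α) : Prop :=
  ∀ l', l' <:+: l → l' ≠ [] → ∃ x, l'.count x = 1

theorem IsConflictFree.of_infix {l l' : List α} (hl : l.IsConflictFree) (h : l' <:+: l) :
    l'.IsConflictFree :=
  fun l'' h'' => hl l'' (h''.trans h)

theorem IsConflictFree.length_lt_two_pow {l : List α} (hl : l.IsConflictFree) :
    l.length < 2 ^ l.toFinset.card := by
  induction hlen : l.length using Nat.strong_induction_on generalizing l with
  | _ m ih =>
  subst hlen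
  rcases eq_or_ne l [] with rfl | hne
  · simp
  obtain ⟨x, hx⟩ := hl l (infix_refl l) hne
  have hxl : x ∈ l := count_pos_iff.1 (by omega)
  obtain ⟨l₁, l₂, rfl⟩ := append_of_mem hxl
  have hcount : l₁.count x + l₂.count x = 0 := by
    simp only [count_append, count_cons_self] at hx; omega
  have hx₁ : x ∉ l₁ := count_eq_zero.1 (by omega)
  have hx₂ : x ∉ l₂ := count_eq_zero.1 (by omega)
  set K := (l₁ ++ x :: l₂).toFinset.card
  have hK : 0 < K := Finset.card_pos.2 ⟨x, by simp⟩
  have hcard {l' : List α} (hl' : l' ⊆ l₁ ++ x :: l₂) (hx' : x ∉ l') :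
      l'.toFinset.card ≤ K - 1 := by
    rw [← Finset.card_erase_of_mem (mem_toFinset.2 hxl)]
    exact Finset.card_le_card fun y hy => Finset.mem_erase.2
      ⟨by rintro rfl; exact hx' (mem_toFinset.1 hy), mem_toFinset.2 (hl' (mem_toFinset.1 hy))⟩
  have h₁ : l₁.length < 2 ^ (K - 1) :=
    (ih _ (by simp) (hl.of_infix (prefix_append _ _).isInfix) rfl).trans_le
      (Nat.pow_le_pow_right two_pos (hcard (by simp) hx₁))
  have h₂ : l₂.length < 2 ^ (K - 1) :=
    (ih _ (by simp only [length_append, length_cons]; omega)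
      (hl.of_infix ⟨l₁ ++ [x], [], by simp⟩) rfl).trans_le
      (Nat.pow_le_pow_right two_pos (hcard (by simp) hx₂))
  have hpow : 2 ^ K = 2 ^ (K - 1) + 2 ^ (K - 1) := by
    rw [← two_mul, ← pow_succ']; congr; omega
  simp only [length_append, length_cons]
  omega

theorem count_map_eq_one {β : Type*} [DecidableEq β] {f : α → β} {l : List α}
    (hl : l.Nodup) {a : α} (ha : a ∈ l) (huniq : ∀ b ∈ l, f b = f a → b = a) :
    (l.map f).count (f a) = 1 := by
  rw [count_eq_countP, countP_map, ← count_eq_one_of_mem hl ha, count_eq_countP]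
  refine countP_congr fun b hb => ?_
  simp only [Function.comp_apply, beq_iff_eq]
  exact ⟨huniq b hb, fun h => h ▸ rfl⟩

end List

namespace Nat

theorem exists_two_pow_succ_dvd_mem_Icc {v a b : ℕ} (ha : 2 ^ v ∣ a) (hb : 2 ^ v ∣ b)
    (hab : a < b) : ∃ m ∈ Finset.Icc a b, 2 ^ (v + 1) ∣ m := by
  obtain ⟨x, rfl⟩ := ha
  obtain ⟨y, rfl⟩ := hb
  have hxy : x < y := Nat.lt_of_mul_lt_mul_left hab
  rcases x.even_or_odd with ⟨t, ht⟩ | ⟨t, ht⟩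
  · exact ⟨2 ^ v * x, Finset.mem_Icc.2 ⟨le_rfl, hab.le⟩,
      ⟨t, by rw [ht, pow_succ]; ring⟩⟩
  · refine ⟨2 ^ v * (x + 1), Finset.mem_Icc.2 ⟨by gcongr; omega, by gcongr; omega⟩,
      ⟨t + 1, by rw [ht, pow_succ]; ring⟩⟩

theorem exists_forall_padicValNat_two_lt {l r : ℕ} (hl : 0 < l) (hlr : l ≤ r) :
    ∃ q ∈ Finset.Icc l r, ∀ q' ∈ Finset.Icc l r, q' ≠ q →
      padicValNat 2 q' < padicValNat 2 q := by
  obtain ⟨q, hq, hmax⟩ :=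
    (Finset.Icc l r).exists_max_image (padicValNat 2) (Finset.nonempty_Icc.2 hlr)
  have hunique : ∀ a ∈ Finset.Icc l r, ∀ b ∈ Finset.Icc l r, a < b →
      padicValNat 2 a = padicValNat 2 q → padicValNat 2 b = padicValNat 2 q → False := by
    intro a ha b hb hab hva hvb
    obtain ⟨m, hm, hdvd⟩ := exists_two_pow_succ_dvd_mem_Icc
      (hva ▸ pow_padicValNat_dvd) (hvb ▸ pow_padicValNat_dvd) hab
    simp only [Finset.mem_Icc] at ha hb hm
    have hm' : m ∈ Finset.Icc l r := Finset.mem_Icc.2 ⟨by omega, by omega⟩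
    have := (padicValNat_dvd_iff_le (by omega)).1 hdvd
    have := hmax m hm'
    omega
  refine ⟨q, hq, fun q' hq' hne => (hmax q' hq').lt_of_ne fun heq => ?_⟩
  rcases hne.lt_or_gt with h | h
  exacts [hunique q' hq' q hq h heq rfl, hunique q hq q' hq' h rfl heq]

theorem padicValNat_two_lt_clog {m n : ℕ} (hn : 1 < n) (hm : m < n) :
    padicValNat 2 m < Nat.clog 2 n := by
  rw [Nat.lt_clog_iff_pow_lt one_lt_two]
  rcases m.eq_zero_or_pos with rfl | hm0
  · simpa using hn
  · exact (Nat.le_of_dvd hm0 pow_padicValNat_dvd).trans_lt hm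

end Nat

namespace SimpleGraph

section

variable {V : Type*} {G : SimpleGraph V} {k : ℕ} {c : Sym2 V → Fin k}

theorem IsCFCColoring.of_lt [LinearOrder V]
    (h : ∀ u v : V, u < v →
      ∃ p : G.Walk u v, p.IsPath ∧ ∃ col, (p.edges.map c).count col = 1) :
    G.IsCFCColoring c := by
  intro u v huv
  rcases huv.lt_or_gt with huv | hvu
  · exact h u v huv
  · obtain ⟨p, hp, col, hcol⟩ := h v u hvu
    exact ⟨p.reverse, hp.reverse, col, by rwa [Walk.edges_reverse, List.map_reverse,
      List.count_reverse]⟩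

theorem IsAcyclic.isConflictFree_map_edges (hG : G.IsAcyclic) (hc : G.IsCFCColoring c)
    {u v : V} {p : G.Walk u v} (hp : p.IsPath) : (p.edges.map c).IsConflictFree := by
  intro l hl hne
  obtain ⟨l', ⟨s, t, hst⟩, rfl⟩ := List.infix_map_iff.1 hl
  -- the infix is the edge list of a subpath, which by acyclicity is the path joining its ends
  -- that `c` provides
  set q := (p.drop s.length).take l'.length
  have hq : q.IsPath := (hp.drop _).take _
  have hqe : q.edges = l' := by simp [q, Walk.edges_take, Walk.edges_drop, ← hst]
  have hends : ¬ q.Nil := fun h => hne (by rw [← hqe, Walk.edges_eq_nil.2 h, List.map_nil])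
  obtain ⟨r, hr, col, hcol⟩ := hc _ _ fun h => hends (hq.nil_iff_eq.2 h)
  have hrq : r = q := congrArg Subtype.val ((hG.subsingleton_path _ _).elim ⟨r, hr⟩ ⟨q, hq⟩)
  exact ⟨col, by rwa [← hqe, ← hrq]⟩

theorem IsAcyclic.length_lt_two_pow (hG : G.IsAcyclic) (hc : G.IsCFCColoring c)
    {u v : V} {p : G.Walk u v} (hp : p.IsPath) : p.length < 2 ^ k := by
  calc p.length = (p.edges.map c).length := by simp
    _ < 2 ^ (p.edges.map c).toFinset.card :=
        (hG.isConflictFree_map_edges hc hp).length_lt_two_pow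
    _ ≤ 2 ^ k := Nat.pow_le_pow_right two_pos
        ((Finset.card_le_univ _).trans (Fintype.card_fin k).le)

end

theorem pathGraph_mem_edges {n : ℕ} {u v i j : Fin n} (p : (pathGraph n).Walk u v)
    (hij : i.val + 1 = j.val) (hui : u ≤ i) (hjv : j ≤ v) : s(i, j) ∈ p.edges := by
  induction p with
  | nil => exact absurd (hui.trans_lt (Fin.lt_def.2 (by omega))) hjv.not_gt
  | @cons u w v h q ih =>
    rw [Walk.edges_cons, List.mem_cons]
    by_cases hwi : w ≤ i
    · exact Or.inr (ih hwi hjv)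
    · have hadj := pathGraph_adj.1 h
      rw [Fin.le_def] at hui hwi
      obtain rfl : u = i := Fin.ext (by omega)
      obtain rfl : w = j := Fin.ext (by omega)
      exact Or.inl rfl

theorem pathGraph_isAcyclic (n : ℕ) : (pathGraph n).IsAcyclic := by
  refine isAcyclic_iff_forall_adj_isBridge.2 fun v w hvw => ?_
  rcases pathGraph_adj.1 hvw with h | h
  · exact isBridge_iff_forall_walk_mem_edges.2 fun p => pathGraph_mem_edges p h le_rfl le_rfl
  · rw [Sym2.eq_swap]
    exact isBridge_iff_forall_walk_mem_edges.2 fun p => pathGraph_mem_edges p h le_rfl le_rfl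

theorem pathGraph_mem_support {n : ℕ} {u v x : Fin n} (p : (pathGraph n).Walk u v)
    (hux : u ≤ x) (hxv : x ≤ v) : x ∈ p.support := by
  rcases hxv.lt_or_eq with hxv | rfl
  · exact p.fst_mem_support_of_mem_edges
      (pathGraph_mem_edges p (j := ⟨x + 1, by omega⟩) rfl hux hxv)
  · exact p.end_mem_support

theorem pathGraph_exists_isPath_mem_Icc {n : ℕ} {u v : Fin n} (huv : u ≤ v) :
    ∃ p : (pathGraph n).Walk u v, p.IsPath ∧ ∀ x ∈ p.support, u ≤ x ∧ x ≤ v := by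
  obtain ⟨d, hd⟩ := Nat.exists_eq_add_of_le (Fin.le_def.1 huv)
  induction d generalizing u with
  | zero =>
    obtain rfl : u = v := Fin.ext (by omega)
    exact ⟨.nil, .nil, by simp⟩
  | succ d ih =>
    let w : Fin n := ⟨u + 1, by omega⟩
    have huw : u < w := Fin.lt_def.2 (Nat.lt_succ_self _)
    obtain ⟨q, hq, hsupp⟩ :=
      ih (u := w) (Fin.le_def.2 (by simp only [w]; omega)) (by simp only [w]; omega)
    refine ⟨.cons (pathGraph_adj.2 (Or.inl rfl) : (pathGraph n).Adj u w) q,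
      hq.cons fun hu => (hsupp u hu).1.not_gt huw, ?_⟩
    simp only [Walk.support_cons, List.forall_mem_cons]
    exact ⟨⟨le_rfl, huv⟩, fun x hx => ⟨huw.le.trans (hsupp x hx).1, (hsupp x hx).2⟩⟩

theorem pathGraph_isCFCColoring_of_padicValNat {n k : ℕ} {c : Sym2 (Fin n) → Fin k}
    (hc : ∀ e ∈ (pathGraph n).edgeSet, (c e : ℕ) = padicValNat 2 e.sup) :
    (pathGraph n).IsCFCColoring c := by
  refine IsCFCColoring.of_lt fun u v huv => ?_
  obtain ⟨p, hp, hsupp⟩ := pathGraph_exists_isPath_mem_Icc huv.le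
  obtain ⟨q, hq, hqmax⟩ :=
    Nat.exists_forall_padicValNat_two_lt (l := u + 1) (r := v) (by omega) huv
  rw [Finset.mem_Icc] at hq
  let e : Sym2 (Fin n) := s(⟨q - 1, by omega⟩, ⟨q, by omega⟩)
  have he : e ∈ p.edges := pathGraph_mem_edges p (by simp only; omega)
    (Fin.le_def.2 (by simp only; omega)) (Fin.le_def.2 hq.2)
  refine ⟨p, hp, c e, List.count_map_eq_one hp.edges_nodup he fun b hb hcb => ?_⟩
  -- `p` stays inside `[u, v]`, so an edge of `p` is `{i - 1, i}` for some `i ∈ [u + 1, v]`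
  induction b with | _ x y =>
  have hx := hsupp x (p.fst_mem_support_of_mem_edges hb)
  have hy := hsupp y (p.snd_mem_support_of_mem_edges hb)
  have hval : padicValNat 2 (max x y : Fin n) = padicValNat 2 q := by
    rw [← Sym2.sup_mk, ← hc _ (p.edges_subset_edgeSet hb), hcb,
      hc _ (p.edges_subset_edgeSet he)]
    simp [e]
  have hxy := pathGraph_adj.1 (p.adj_of_mem_edges hb)
  have hmax : (max x y : Fin n).val = q := by
    by_contra hne
    refine (hqmax _ (Finset.mem_Icc.2 ?_) hne).ne hval
    simp only [Fin.le_def, Fin.lt_def] at hx hy huv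
    simp only [Fin.coe_max]
    omega
  rw [Fin.coe_max] at hmax
  refine Sym2.inf_eq_inf_and_sup_eq_sup.1 ⟨Fin.ext ?_, Fin.ext ?_⟩ <;>
    simp only [Sym2.inf_mk, Sym2.sup_mk, Fin.coe_min, Fin.coe_max, e] <;> omega

theorem pathGraph_le_two_pow_of_isCFCColoring {n k : ℕ} {c : Sym2 (Fin n) → Fin k}
    (hc : (pathGraph n).IsCFCColoring c) : n ≤ 2 ^ k := by
  obtain _ | m := n
  · exact Nat.zero_le _
  obtain ⟨p, hp⟩ := ((pathGraph_connected m).preconnected 0 (Fin.last m)).exists_isPath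
  have hham : p.IsHamiltonian := fun x => List.count_eq_one_of_mem hp.support_nodup
    (pathGraph_mem_support p (Fin.zero_le x) (Fin.le_last x))
  have hlen : p.length = m := by simpa using hham.length_eq
  have := (pathGraph_isAcyclic _).length_lt_two_pow hc hp
  omega

end SimpleGraph

/-- For `n ≥ 2`, the conflict-free connection number of the path on `n` vertices
equals `⌈log₂ n⌉`. -/
theorem stmt_2 (n : ℕ) (hn : 2 ≤ n) : (pathGraph n).cfc = Nat.clog 2 n := by
  let c : Sym2 (Fin n) → Fin (Nat.clog 2 n) :=
    fun e => ⟨padicValNat 2 e.sup, Nat.padicValNat_two_lt_clog hn e.sup.isLt⟩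
  have hc : (pathGraph n).IsCFCColoring c := pathGraph_isCFCColoring_of_padicValNat fun _ _ => rfl
  exact le_antisymm (Nat.sInf_le ⟨c, hc⟩) (le_csInf ⟨_, c, hc⟩ fun _ ⟨_, hc'⟩ =>
    (Nat.clog_le_iff_le_pow one_lt_two).2 (pathGraph_le_two_pow_of_isCFCColoring hc'))
end

section
/- Let T be a tree of order n ≥ 2. Then the conflict-free connection number of T satisfies cfc(T) ≥ ⌈log₂ n⌉. -/
open SimpleGraph

/-!
Fix a root `r` of the tree and record, for every vertex `v`, the parity of the number of
edges of each color on a walk from `r` to `v`. In a tree this parity vector does not depend on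
the walk, since any walk traverses each edge off the unique path an even number of times.
If `u ≠ v` had the same vector, then on the path from `u` to `v` every color would occur an even
number of times, so no color would occur exactly once. Hence `v ↦ parity vector` embeds the
`n` vertices into `(ZMod 2)ᵏ`, and `n ≤ 2ᵏ`.
-/

namespace SimpleGraph

variable {V α : Type*} {G : SimpleGraph V} [DecidableEq α]

namespace Walk

def colorParity (c : Sym2 V → α) {u v : V} (p : G.Walk u v) (a : α) : ZMod 2 :=
  (p.edges.map c).count a

variable (c : Sym2 V → α)

@[simp]
lemma colorParity_nil {u : V} : (nil : G.Walk u u).colorParity c = 0 := by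
  funext a
  simp [colorParity]

lemma colorParity_cons {u v w : V} (h : G.Adj u v) (p : G.Walk v w) :
    (cons h p).colorParity c = Pi.single (c s(u, v)) 1 + p.colorParity c := by
  funext a
  by_cases ha : c s(u, v) = a
  · subst ha
    simp [colorParity, add_comm]
  · simp [colorParity, ha, Ne.symm ha]

lemma colorParity_append {u v w : V} (p : G.Walk u v) (q : G.Walk v w) :
    (p.append q).colorParity c = p.colorParity c + q.colorParity c := by
  funext a
  simp [colorParity]

end Walk

lemma IsAcyclic.eq_of_isPath (hG : G.IsAcyclic) {u v : V} {p q : G.Walk u v}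
    (hp : p.IsPath) (hq : q.IsPath) : p = q :=
  congrArg Subtype.val ((hG.subsingleton_path u v).elim ⟨p, hp⟩ ⟨q, hq⟩)

theorem IsAcyclic.colorParity_eq_of_isPath (hG : G.IsAcyclic) (c : Sym2 V → α) {u v : V}
    (w : G.Walk u v) {p : G.Walk u v} (hp : p.IsPath) : w.colorParity c = p.colorParity c := by
  classical
  induction w with
  | nil => rw [Walk.eq_nil_iff_nil.mpr (Walk.isPath_iff_nil.mp hp)]
  | @cons u x v h w ih =>
    have hq := w.bypass_isPath
    rw [Walk.colorParity_cons, ih hq]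
    by_cases hu : u ∈ w.bypass.support
    · -- The path from `x` to `v` then runs through `u`, i.e. it is the edge `xu` followed by `p`.
      have htake : w.bypass.takeUntil u hu = Walk.cons h.symm Walk.nil :=
        hG.eq_of_isPath (hq.takeUntil hu) (by simpa using h.ne.symm)
      have hdrop : w.bypass.dropUntil u hu = p := hG.eq_of_isPath (hq.dropUntil hu) hp
      rw [← w.bypass.take_spec hu, Walk.colorParity_append, htake, hdrop,
        Walk.colorParity_cons, Walk.colorParity_nil, add_zero, Sym2.eq_swap,
        ← add_assoc, ← Pi.single_add, CharTwo.add_self_eq_zero, Pi.single_zero, zero_add]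
    · rw [← Walk.colorParity_cons c h,
        hG.eq_of_isPath (Walk.cons_isPath_iff h _ |>.mpr ⟨hq, hu⟩) hp]

theorem IsAcyclic.colorParity_eq (hG : G.IsAcyclic) (c : Sym2 V → α) {u v : V}
    (w w' : G.Walk u v) : w.colorParity c = w'.colorParity c := by
  classical
  exact (hG.colorParity_eq_of_isPath c w w'.bypass_isPath).trans
    (hG.colorParity_eq_of_isPath c w' w'.bypass_isPath).symm

theorem Preconnected.isCFCColoring_of_injective (hG : G.Preconnected) {k : ℕ}
    {c : Sym2 V → Fin k} (hc : Function.Injective c) : G.IsCFCColoring c := by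
  classical
  intro u v huv
  obtain ⟨w⟩ := hG u v
  obtain ⟨x, h, q, hq⟩ := Walk.not_nil_iff.mp (Walk.not_nil_of_ne (p := w.bypass) huv)
  refine ⟨w.bypass, w.bypass_isPath, c s(u, x), ?_⟩
  refine List.count_eq_one_of_mem (w.bypass_isPath.edges_nodup.map hc) (List.mem_map_of_mem ?_)
  simp [hq]

theorem IsTree.card_le_two_pow_of_isCFCColoring [Fintype V] (hT : G.IsTree) {k : ℕ}
    {c : Sym2 V → Fin k} (hc : G.IsCFCColoring c) : Fintype.card V ≤ 2 ^ k := by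
  obtain ⟨r⟩ := hT.connected.nonempty
  let walkFrom (v : V) : G.Walk r v := (hT.connected.preconnected r v).some
  have hinj : Function.Injective fun v => (walkFrom v).colorParity c := by
    intro u v (huv : (walkFrom u).colorParity c = (walkFrom v).colorParity c)
    by_contra hne
    obtain ⟨p, -, a, ha⟩ := hc u v hne
    have hsplit := hT.isAcyclic.colorParity_eq c ((walkFrom u).append p) (walkFrom v)
    rw [Walk.colorParity_append, ← huv, add_eq_left] at hsplit
    have : p.colorParity c a = 1 := by simp [Walk.colorParity, ha]
    simp [hsplit] at this
  simpa using Fintype.card_le_of_injective _ hinj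

end SimpleGraph

theorem stmt_3_general {V : Type*} [Fintype V] (T : SimpleGraph V) (hT : T.IsTree) :
    Nat.clog 2 (Fintype.card V) ≤ T.cfc := by
  classical
  refine le_csInf ⟨_, Fintype.equivFin (Sym2 V),
    hT.connected.preconnected.isCFCColoring_of_injective (Fintype.equivFin _).injective⟩ ?_
  rintro k ⟨c, hc⟩
  exact Nat.clog_le_of_le_pow (hT.card_le_two_pow_of_isCFCColoring hc)

/-- If `T` is a tree of order `n ≥ 2`, then `cfc(T) ≥ ⌈log₂ n⌉`. -/
theorem stmt_3 {V : Type*} [Fintype V] (T : SimpleGraph V) (hT : T.IsTree)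
    (hn : 2 ≤ Fintype.card V) : Nat.clog 2 (Fintype.card V) ≤ T.cfc :=
  stmt_3_general T hT
end

section
/- Let G be a connected simple graph of order n having exactly k cut-edges, where 0 ≤ k ≤ n−1. Then the number of edges of G satisfies |E(G)| ≤ C(n−k, 2) + k, where C(m,2) = m(m−1)/2 denotes a binomial coefficient. -/
/-!
Induction on the number `k` of bridges. A bridge `uv` splits `G` into the components `S ∋ u`
and `T ∋ v` of `G - uv`. The induced graphs `G[S]` and `G[T]` are connected, every other edge
lies inside `S` or inside `T`, and a bridge of `G` inside `S` is exactly a bridge of `G[S]`: a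
cycle of `G` avoids `uv`, so it never leaves its side. The induction hypothesis bounds the edges
of both sides, and `C(a+1, 2) + C(b+1, 2) ≤ C(a+b+1, 2)` glues the two bounds; this needs that a
connected graph has fewer bridges than vertices, which holds because every bridge lies in every
spanning tree.
-/

universe u

open SimpleGraph

lemma Nat.choose_two_add_choose_two_le (a b : ℕ) :
    (a + 1).choose 2 + (b + 1).choose 2 ≤ (a + b + 1).choose 2 := by
  induction b with
  | zero => simp
  | succ b ih =>
    have succ_choose_two (m : ℕ) : (m + 1).choose 2 = m.choose 2 + m := by
      rw [Nat.choose_succ_succ', Nat.choose_one_right, add_comm]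
    rw [← add_assoc, succ_choose_two (a + b + 1), succ_choose_two (b + 1)]
    omega

lemma Nat.choose_two_sub_add_le {a b i j : ℕ} (hi : i < a) (hj : j < b) :
    (a - i).choose 2 + i + ((b - j).choose 2 + j) + 1 ≤
      (a + b - (i + j + 1)).choose 2 + (i + j + 1) := by
  obtain ⟨a, rfl⟩ := Nat.exists_eq_add_of_lt hi
  obtain ⟨b, rfl⟩ := Nat.exists_eq_add_of_lt hj
  have := Nat.choose_two_add_choose_two_le a b
  rw [show i + a + 1 - i = a + 1 by omega, show j + b + 1 - j = b + 1 by omega,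
    show i + a + 1 + (j + b + 1) - (i + j + 1) = a + b + 1 by omega]
  omega

namespace SimpleGraph

variable {V : Type*} {G : SimpleGraph V}

lemma ncard_preimage_sym2Map_val (s : Set V) (A : Set (Sym2 V)) :
    (Sym2.map ((↑) : s → V) ⁻¹' A).ncard = {a ∈ A | ∀ z ∈ a, z ∈ s}.ncard := by
  rw [← Set.ncard_image_of_injective _ (Sym2.map.injective Subtype.val_injective)]
  congr 1
  ext a
  induction a using Sym2.ind with
  | _ x y =>
    constructor
    · rintro ⟨b, hb, hba⟩
      induction b using Sym2.ind with
      | _ x' y' =>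
        simp only [Sym2.map_mk] at hba
        rw [← hba]
        exact ⟨hb, by simp⟩
    · rintro ⟨ha, hxy⟩
      exact ⟨s(⟨x, hxy x (by simp)⟩, ⟨y, hxy y (by simp)⟩), ha, rfl⟩

lemma edgeSet_induce (s : Set V) :
    (G.induce s).edgeSet = Sym2.map ((↑) : s → V) ⁻¹' G.edgeSet := by
  ext e
  induction e using Sym2.ind with
  | _ x y => rfl

lemma ncard_eq_preimage_add_preimage_add_one [Finite V] {s t : Set V} (hst : IsCompl s t)
    {A : Set (Sym2 V)} {u v : V} (hu : u ∈ s) (hv : v ∈ t) (huv : s(u, v) ∈ A)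
    (hA : ∀ x y, s(x, y) ∈ A → s(x, y) ≠ s(u, v) → (x ∈ s ↔ y ∈ s)) :
    A.ncard =
      (Sym2.map ((↑) : s → V) ⁻¹' A).ncard + (Sym2.map ((↑) : t → V) ⁻¹' A).ncard + 1 := by
  obtain rfl := hst.compl_eq
  rw [ncard_preimage_sym2Map_val, ncard_preimage_sym2Map_val]
  set As := {a ∈ A | ∀ z ∈ a, z ∈ s}
  set At := {a ∈ A | ∀ z ∈ a, z ∈ sᶜ}
  have hdisj : Disjoint As At := by
    refine Set.disjoint_left.mpr fun a ha ha' => ?_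
    obtain ⟨x, y⟩ := a
    exact ha'.2 x (Sym2.mem_mk_left x y) (ha.2 x (Sym2.mem_mk_left x y))
  have hnotMem : s(u, v) ∉ As ∪ At := by
    rintro (h | h)
    · exact hv (h.2 v (Sym2.mem_mk_right u v))
    · exact h.2 u (Sym2.mem_mk_left u v) hu
  rw [← Set.ncard_union_eq hdisj, ← Set.ncard_insert_of_notMem hnotMem]
  congr 1
  ext a
  obtain ⟨x, y⟩ := a
  by_cases hxy : s(x, y) = s(u, v)
  · simp [hxy, huv]
  · simp only [As, At, Set.mem_insert_iff, hxy, Set.mem_union, Set.mem_ofPred_eq, Sym2.mem_iff,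
      forall_eq_or_imp, forall_eq, Set.mem_compl_iff, false_or]
    constructor
    · intro ha
      have := hA x y ha hxy
      tauto
    · tauto

lemma IsBridge.mem_edgeSet (hG : G.Preconnected) {e : Sym2 V} (he : G.IsBridge e) :
    e ∈ G.edgeSet := by
  obtain ⟨x, y⟩ := e
  exact he.reachable_iff_adj.mp (hG x y)

lemma Connected.ncard_setOf_isBridge_lt [Finite V] (hG : G.Connected) :
    {e | G.IsBridge e}.ncard < Nat.card V := by
  obtain ⟨T, hTG, hT⟩ := hG.exists_isTree_le
  have hbridges : {e | G.IsBridge e} ⊆ T.edgeSet := by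
    intro e hb
    induction e using Sym2.ind with | _ x y =>
    by_contra hxy
    have hTle : T ≤ G.deleteEdges {s(x, y)} := fun a b hab =>
      (deleteEdges_adj ..).mpr ⟨hTG hab, fun h => hxy ?_⟩
    · exact hb ((hT.connected.mono hTle).preconnected x y)
    · rw [← Set.mem_singleton_iff.mp h]
      exact hab
  have hcard := (isTree_iff_connected_and_card.mp hT).2
  rw [Nat.card_coe_set_eq] at hcard
  have := Set.ncard_le_ncard hbridges
  omega

lemma Preconnected.reachable_deleteEdges_or (hG : G.Preconnected) (u v z : V) :
    (G.deleteEdges {s(u, v)}).Reachable u z ∨ (G.deleteEdges {s(u, v)}).Reachable v z := by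
  suffices ∀ {a b : V} (p : G.Walk a b),
      (G.deleteEdges {s(u, v)}).Reachable u a ∨ (G.deleteEdges {s(u, v)}).Reachable v a →
      (G.deleteEdges {s(u, v)}).Reachable u b ∨ (G.deleteEdges {s(u, v)}).Reachable v b from
    this (hG u z).some (.inl .rfl)
  intro a b p
  induction p with
  | nil => exact id
  | @cons a b c hab p ih =>
    refine fun h => ih ?_
    by_cases he : s(a, b) = s(u, v)
    · rcases Sym2.eq_iff.mp he with ⟨-, rfl⟩ | ⟨-, rfl⟩
      · exact .inr .rfl
      · exact .inl .rfl
    · have hab' : (G.deleteEdges {s(u, v)}).Adj a b := (deleteEdges_adj ..).mpr ⟨hab, he⟩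
      exact h.imp (·.trans hab'.reachable) (·.trans hab'.reachable)

lemma IsBridge.isCompl_supp_connectedComponentMk_deleteEdges (hG : G.Preconnected) {u v : V}
    (hb : G.IsBridge s(u, v)) :
    IsCompl ((G.deleteEdges {s(u, v)}).connectedComponentMk u).supp
      ((G.deleteEdges {s(u, v)}).connectedComponentMk v).supp := by
  refine (eq_compl_iff_isCompl.mp ?_).symm
  ext z
  simp only [Set.mem_compl_iff, ConnectedComponent.mem_supp_iff, ConnectedComponent.eq]
  constructor
  · exact fun hzv hzu => hb (hzu.symm.trans hzv)
  · exact fun hzu => ((hG.reachable_deleteEdges_or u v z).resolve_left (hzu ·.symm)).symm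

lemma ConnectedComponent.connected_induce_supp_of_le {G' : SimpleGraph V} (hle : G' ≤ G)
    (C : G'.ConnectedComponent) : (G.induce C.supp).Connected :=
  C.connected_toSimpleGraph.mono fun _ _ h => hle h

lemma Walk.support_subset_supp {u v : V} (p : G.Walk u v) {C : G.ConnectedComponent}
    (hu : u ∈ C.supp) : ∀ z ∈ p.support, z ∈ C.supp := by
  induction p with
  | nil => simpa using hu
  | cons h p ih =>
    simp only [Walk.support_cons, List.mem_cons, forall_eq_or_imp]
    exact ⟨hu, ih ((C.mem_supp_congr_adj h).mp hu)⟩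

lemma Walk.support_subset_supp_of_mem {u v x : V} (p : G.Walk u v) {C : G.ConnectedComponent}
    (hx : x ∈ p.support) (hxC : x ∈ C.supp) : ∀ z ∈ p.support, z ∈ C.supp := by
  classical
  exact p.support_subset_supp <|
    (p.takeUntil x hx).reverse.support_subset_supp hxC u (Walk.end_mem_support _)

lemma isBridge_induce_supp_iff {e : Sym2 V} (he : G.IsBridge e)
    (C : (G.deleteEdges {e}).ConnectedComponent) (x y : C.supp) :
    (G.induce C.supp).IsBridge s(x, y) ↔ G.IsBridge s(↑x, ↑y) := by
  have hconn := C.connected_induce_supp_of_le (G.deleteEdges_le {e})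
  by_cases hxy : G.Adj x y
  swap
  · have hr := hconn.preconnected x y
    have hrG : G.Reachable x y := hr.map (Embedding.induce C.supp).toHom
    exact iff_of_false (fun h => hxy (h.reachable_iff_adj.mp hr))
      (fun h => hxy (h.reachable_iff_adj.mp hrG))
  rw [isBridge_iff_forall_cycle_notMem hxy, isBridge_iff_forall_cycle_notMem hxy]
  constructor
  · intro h w c hc hxyc
    have hsupp : ∀ z ∈ c.support, z ∈ C.supp := by
      let c' := c.toDeleteEdges {e} fun a ha hae => he.notMem_edges_of_isCycle hc (hae ▸ ha)
      simpa [c'] using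
        c'.support_subset_supp_of_mem (by simpa [c'] using c.fst_mem_support_of_mem_edges hxyc) x.2
    have hc' : (c.induce C.supp hsupp).IsCycle := by
      rwa [← Walk.isCycle_map_iff_of_injective (f := (Embedding.induce C.supp).toHom)
        Subtype.val_injective, Walk.map_induce]
    have hedges := congrArg Walk.edges (Walk.map_induce c hsupp)
    rw [Walk.edges_map] at hedges
    obtain ⟨e', he', he'xy⟩ := List.mem_map.mp (by rw [hedges]; exact hxyc)
    obtain rfl : e' = s(x, y) := Sym2.map.injective Subtype.val_injective he'xy
    exact h _ hc' he'
  · intro h w c hc hxyc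
    refine h (c.map (Embedding.induce C.supp).toHom)
      ((Walk.isCycle_map_iff_of_injective Subtype.val_injective).mpr hc) ?_
    rw [Walk.edges_map]
    exact List.mem_map_of_mem hxyc

lemma setOf_isBridge_induce_supp {e : Sym2 V} (he : G.IsBridge e)
    (C : (G.deleteEdges {e}).ConnectedComponent) :
    {a | (G.induce C.supp).IsBridge a} =
      Sym2.map ((↑) : C.supp → V) ⁻¹' {a | G.IsBridge a} := by
  ext a
  induction a using Sym2.ind with | _ x y => exact isBridge_induce_supp_iff he C x y

lemma ncard_edgeSet_le_choose_two [Finite V] (G : SimpleGraph V) :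
    G.edgeSet.ncard ≤ (Nat.card V).choose 2 := by
  classical
  have := Fintype.ofFinite V
  rw [Set.ncard_eq_toFinset_card', Nat.card_eq_fintype_card]
  exact G.card_edgeFinset_le_card_choose_two

theorem Connected.ncard_edgeSet_le_choose_two_add_ncard_bridges {V : Type u} [Finite V]
    {G : SimpleGraph V} (hG : G.Connected) :
    G.edgeSet.ncard ≤
      (Nat.card V - {e | G.IsBridge e}.ncard).choose 2 + {e | G.IsBridge e}.ncard := by
  induction hk : {e | G.IsBridge e}.ncard using Nat.strong_induction_on generalizing V with
  | _ k ih =>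
  obtain rfl | hk0 := k.eq_zero_or_pos
  · simpa using G.ncard_edgeSet_le_choose_two
  obtain ⟨e, he⟩ := Set.nonempty_of_ncard_ne_zero (hk ▸ hk0.ne')
  induction e using Sym2.ind with | _ u v =>
  set S := ((G.deleteEdges {s(u, v)}).connectedComponentMk u).supp
  set T := ((G.deleteEdges {s(u, v)}).connectedComponentMk v).supp
  have hST : IsCompl S T := he.isCompl_supp_connectedComponentMk_deleteEdges hG.preconnected
  have hside (x y : V) (hxy : s(x, y) ∈ G.edgeSet) (hne : s(x, y) ≠ s(u, v)) :
      x ∈ S ↔ y ∈ S :=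
    ConnectedComponent.mem_supp_congr_adj _ ((deleteEdges_adj ..).mpr ⟨hxy, hne⟩)
  have hE := ncard_eq_preimage_add_preimage_add_one hST rfl rfl
    (he.mem_edgeSet hG.preconnected) hside
  have hB := ncard_eq_preimage_add_preimage_add_one hST rfl rfl he
    fun x y hb => hside x y (IsBridge.mem_edgeSet hG.preconnected hb)
  rw [← edgeSet_induce, ← edgeSet_induce] at hE
  rw [← setOf_isBridge_induce_supp he, ← setOf_isBridge_induce_supp he, hk] at hB
  have hconn (C : (G.deleteEdges {s(u, v)}).ConnectedComponent) : (G.induce C.supp).Connected :=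
    C.connected_induce_supp_of_le (G.deleteEdges_le _)
  have hcard : Nat.card S + Nat.card T = Nat.card V := by
    rw [Nat.card_coe_set_eq, Nat.card_coe_set_eq, ← hST.compl_eq, Set.ncard_add_ncard_compl]
  rw [hE, hB, ← hcard]
  exact (Nat.add_le_add_right (Nat.add_le_add (ih _ (by omega) (hconn _) rfl)
    (ih _ (by omega) (hconn _) rfl)) 1).trans <|
      Nat.choose_two_sub_add_le (hconn _).ncard_setOf_isBridge_lt (hconn _).ncard_setOf_isBridge_lt

end SimpleGraph

theorem stmt_5_general {V : Type*} [Fintype V] (G : SimpleGraph V) (n k : ℕ)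
    (hn : Fintype.card V = n) (hc : G.Connected)
    (hk : {e : Sym2 V | G.IsBridge e}.ncard = k) :
    G.edgeSet.ncard ≤ (n - k).choose 2 + k := by
  rw [← hn, ← hk, ← Nat.card_eq_fintype_card]
  exact hc.ncard_edgeSet_le_choose_two_add_ncard_bridges

/-- A connected graph of order `n` with exactly `k` cut-edges has at most
`C(n-k, 2) + k` edges. -/
theorem stmt_5 {V : Type*} [Fintype V] (G : SimpleGraph V) (n k : ℕ)
    (hn : Fintype.card V = n) (hc : G.Connected)
    (hk : {e : Sym2 V | G.IsBridge e}.ncard = k) (hkn : k ≤ n - 1) :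
    G.edgeSet.ncard ≤ (n - k).choose 2 + k :=
  stmt_5_general G n k hn hc hk
end

section
/- Let G be a connected simple graph of order n ≥ 2. Then the conflict-free connection number of G equals n−1 if and only if G is the star K_{1,n−1}. -/
open SimpleGraph

/-- `G` is a star: there is a center adjacent to all other vertices, and these are the
only adjacencies. -/
def SimpleGraph.IsStar {V : Type*} (G : SimpleGraph V) : Prop :=
  ∃ c : V, ∀ a b : V, G.Adj a b ↔ a ≠ b ∧ (a = c ∨ b = c)

/-!
In a star, the only path between two leaves consists of their two pendant edges, which must
therefore get different colours; so the `n - 1` edges carry `n - 1` distinct colours, and `n - 1`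
colours clearly suffice.

If `G` is not a star, then either `G` is a triangle, where one colour suffices, or `G` has two
disjoint edges `e` and `f`. Extend them to a spanning tree and colour its `n - 1` edges with
distinct colours except that `e` and `f` share one, `n - 2` colours in all. Adjacent vertices are
joined by their edge; any other tree path has two consecutive edges, which meet and so are not
`{e, f}`, hence it contains an edge whose colour appears exactly once on it.
-/

theorem List.count_map_eq_one_s9 {α β : Type*} [DecidableEq β] {f : α → β} {l : List α}
    (hl : l.Nodup) {a : α} (ha : a ∈ l) (hf : ∀ x ∈ l, f x = f a → x = a) :
    (l.map f).count (f a) = 1 := by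
  classical
  rw [List.count_eq_countP, List.countP_map, ← List.count_eq_one_of_mem hl ha,
    List.count_eq_countP]
  refine List.countP_congr fun x hx => ?_
  simp only [Function.comp_apply, beq_iff_eq]
  exact ⟨hf x hx, fun h => h ▸ rfl⟩

theorem Finset.exists_injOn_fin_of_card_eq {α : Type*} {s : Finset α} {k : ℕ}
    (hk : s.card = k) {a : α} (ha : a ∈ s) :
    ∃ c : α → Fin k, Set.InjOn c s ∧ ∀ x ∉ s, c x = c a := by
  classical
  let β := Finset.equivFinOfCardEq hk
  refine ⟨fun x => if hx : x ∈ s then β ⟨x, hx⟩ else β ⟨a, ha⟩, fun x hx y hy hxy => ?_,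
    fun x hx => by simp [hx, ha]⟩
  simp only [Finset.mem_coe] at hx hy
  simp only [dif_pos hx, dif_pos hy] at hxy
  exact congrArg Subtype.val (β.injective hxy)

namespace SimpleGraph

variable {V : Type*} {G : SimpleGraph V}

theorem Adj.exists_isPath_count_eq_one {k : ℕ} (c : Sym2 V → Fin k) {u v : V} (h : G.Adj u v) :
    ∃ p : G.Walk u v, p.IsPath ∧ ∃ col : Fin k, (p.edges.map c).count col = 1 :=
  ⟨h.toWalk, by simp [h.ne], c s(u, v), by simp⟩

theorem Walk.IsPath.exists_mem_edges_ne_ne {u v : V} {p : G.Walk u v} (hp : p.IsPath)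
    (h2 : 2 ≤ p.length) {e f : Sym2 V} (hef : ∀ x ∈ e, x ∉ f) :
    ∃ g ∈ p.edges, g ≠ e ∧ g ≠ f := by
  cases p with
  | nil => simp at h2
  | @cons _ w _ h₁ q =>
    cases q with
    | nil => simp at h2
    | @cons _ x _ h₂ q =>
      have hne : s(u, w) ≠ s(w, x) := by
        have := hp.edges_nodup
        rw [Walk.edges_cons, Walk.edges_cons, List.nodup_cons] at this
        exact fun h => this.1 (h ▸ List.mem_cons_self ..)
      by_contra! H
      have h₁e := H s(u, w) (by simp)
      have h₂e := H s(w, x) (by simp)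
      have hw₁ : w ∈ s(u, w) := Sym2.mem_mk_right u w
      have hw₂ : w ∈ s(w, x) := Sym2.mem_mk_left w x
      by_cases h₁ : s(u, w) = e <;> by_cases h₂ : s(w, x) = e
      · exact hne (h₁.trans h₂.symm)
      · exact hef w (h₁ ▸ hw₁) (h₂e h₂ ▸ hw₂)
      · exact hef w (h₂ ▸ hw₂) (h₁e h₁ ▸ hw₁)
      · exact hne ((h₁e h₁).trans (h₂e h₂).symm)

namespace IsCFCColoring

variable {k : ℕ} {c : Sym2 V → Fin k}

theorem mono {H : SimpleGraph V} (hHG : H ≤ G) (hc : H.IsCFCColoring c) : G.IsCFCColoring c := by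
  intro u v huv
  obtain ⟨p, hp, col, hcol⟩ := hc u v huv
  exact ⟨p.mapLe hHG, hp.mapLe hHG, col, by rwa [Walk.edges_mapLe_eq_edges]⟩

theorem cfc_le (hc : G.IsCFCColoring c) : G.cfc ≤ k :=
  Nat.sInf_le ⟨c, hc⟩

theorem of_injOn (hG : G.Connected) (hc : Set.InjOn c G.edgeSet) : G.IsCFCColoring c := by
  intro u v huv
  obtain ⟨p, hp⟩ := (hG.preconnected u v).exists_isPath
  refine ⟨p, hp, ?_⟩
  cases p with
  | nil => exact absurd rfl huv
  | @cons _ w _ h q =>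
    refine ⟨c s(u, w), List.count_map_eq_one_s9 hp.edges_nodup (by simp) fun g hg hcg => ?_⟩
    exact hc ((Walk.cons h q).edges_subset_edgeSet hg) (by simpa using h) hcg

/-- The only repeated colour on the edges is that of `e` and `f`, and no path with two or
more edges uses only these two disjoint edges. -/
theorem of_injOn_diff (hG : G.Connected) {e f : Sym2 V} (he : e ∈ G.edgeSet)
    (hef : ∀ x ∈ e, x ∉ f) (hc : Set.InjOn c (G.edgeSet \ {f})) (hcf : c f = c e) :
    G.IsCFCColoring c := by
  intro u v huv
  by_cases hadj : G.Adj u v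
  · exact hadj.exists_isPath_count_eq_one c
  obtain ⟨p, hp⟩ := (hG.preconnected u v).exists_isPath
  have hlen : 2 ≤ p.length := by
    by_contra! hlt
    interval_cases h : p.length
    · exact huv (Walk.eq_of_length_eq_zero h)
    · exact hadj (Walk.adj_of_length_eq_one h)
  obtain ⟨g, hg, hge, hgf⟩ := hp.exists_mem_edges_ne_ne hlen hef
  have heS : e ∈ G.edgeSet \ {f} := by
    refine ⟨he, fun hef' => ?_⟩
    induction e using Sym2.ind with
    | _ a b => exact hef a (Sym2.mem_mk_left a b) (hef' ▸ Sym2.mem_mk_left a b)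
  have hgS : g ∈ G.edgeSet \ {f} := ⟨p.edges_subset_edgeSet hg, hgf⟩
  refine ⟨p, hp, c g, List.count_map_eq_one_s9 hp.edges_nodup hg fun h hh hch => ?_⟩
  by_cases hhf : h = f
  · exact absurd (hc heS hgS (hcf ▸ hhf ▸ hch)).symm hge
  · exact hc ⟨p.edges_subset_edgeSet hh, hhf⟩ hgS hch

end IsCFCColoring

theorem isStar_iff_exists_eq_starGraph : G.IsStar ↔ ∃ r, G = starGraph r := by
  simp only [IsStar, SimpleGraph.ext_iff, funext_iff, starGraph_adj, eq_iff_iff]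

theorem card_sub_one_le_of_isCFCColoring_starGraph [Fintype V] {r : V} {k : ℕ}
    {c : Sym2 V → Fin k} (hc : (starGraph r).IsCFCColoring c) : Fintype.card V - 1 ≤ k := by
  classical
  have hleaf : Set.InjOn (fun x => c s(x, r)) (Finset.univ.erase r) := by
    intro x hx y hy hxy
    by_contra hne
    obtain ⟨p, hp, col, hcol⟩ := hc x y hne
    have hxr : (starGraph r).Adj x r := starGraph_center_adj' (by simpa [eq_comm] using hx)
    have hry : (starGraph r).Adj r y := starGraph_center_adj (by simpa [eq_comm] using hy)
    have hq : (Walk.cons hxr (Walk.cons hry Walk.nil)).IsPath := by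
      simp [Walk.isPath_def, hxr.ne, hry.ne, hne]
    obtain rfl : p = Walk.cons hxr (Walk.cons hry Walk.nil) :=
      congrArg Subtype.val (((isAcyclic_starGraph r).subsingleton_path x y).elim ⟨p, hp⟩ ⟨_, hq⟩)
    simp only [Walk.edges_cons, Walk.edges_nil, List.map_cons, List.map_nil,
      Sym2.eq_swap (a := r)] at hcol
    rw [show c s(x, r) = c s(y, r) from hxy] at hcol
    by_cases h : c s(y, r) = col <;> simp [h] at hcol
  simpa [Finset.card_erase_of_mem] using
    Finset.card_le_card_of_injOn _ (fun _ _ => Finset.mem_univ _) hleaf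

theorem exists_isCFCColoring_starGraph [Fintype V] (r : V) (hn : 2 ≤ Fintype.card V) :
    ∃ c : Sym2 V → Fin (Fintype.card V - 1), (starGraph r).IsCFCColoring c := by
  classical
  obtain ⟨w, hw⟩ := Fintype.exists_ne_of_one_lt_card hn r
  have hcard : (starGraph r).edgeFinset.card = Fintype.card V - 1 := by
    have := (isTree_starGraph r).card_edgeFinset
    omega
  obtain ⟨c, hc, -⟩ := Finset.exists_injOn_fin_of_card_eq hcard
    (a := s(r, w)) (by simpa using hw.symm)
  exact ⟨c, .of_injOn (connected_starGraph r) (by simpa using hc)⟩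

theorem isAcyclic_edge_sup_edge {a b c d : V} (hab : a ≠ b) (hca : c ≠ a) (hcb : c ≠ b)
    (hcd : c ≠ d) : (edge a b ⊔ edge c d).IsAcyclic := by
  have hacyc : (edge a b).IsAcyclic := by
    simpa using isAcyclic_bot.sup_edge_of_not_reachable (reachable_bot.not.mpr hab)
  refine hacyc.sup_edge_of_not_reachable ?_
  rintro ⟨_ | ⟨hadj, _⟩⟩
  · exact hcd rfl
  · simp [edge_adj, hca, hcb] at hadj

theorem Connected.exists_isCFCColoring_of_disjoint_edges [Fintype V] (hG : G.Connected)
    {a b c d : V} (hab : G.Adj a b) (hcd : G.Adj c d) (hdisj : ∀ x ∈ s(a, b), x ∉ s(c, d)) :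
    ∃ col : Sym2 V → Fin (Fintype.card V - 2), G.IsCFCColoring col := by
  classical
  have hac : c ≠ a := fun h => hdisj a (Sym2.mem_mk_left a b) (h ▸ Sym2.mem_mk_left c d)
  have hbc : c ≠ b := fun h => hdisj b (Sym2.mem_mk_right a b) (h ▸ Sym2.mem_mk_left c d)
  have had : d ≠ a := fun h => hdisj a (Sym2.mem_mk_left a b) (h ▸ Sym2.mem_mk_right c d)
  obtain ⟨T, hHT, hTG, hT⟩ := hG.exists_isTree_le_of_le_of_isAcyclic
    (sup_le (G.edge_le_iff.mpr (.inr hab)) (G.edge_le_iff.mpr (.inr hcd)))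
    (isAcyclic_edge_sup_edge hab.ne hac hbc hcd.ne)
  have hT_ab : s(a, b) ∈ T.edgeFinset := by
    simpa using hHT (show (edge a b ⊔ edge c d).Adj a b by simp [edge_adj, hab.ne])
  have hT_cd : s(c, d) ∈ T.edgeFinset := by
    simpa using hHT (show (edge a b ⊔ edge c d).Adj c d by simp [edge_adj, hcd.ne])
  have hcard : (T.edgeFinset.erase s(c, d)).card = Fintype.card V - 2 := by
    have := hT.card_edgeFinset
    rw [Finset.card_erase_of_mem hT_cd]
    omega
  obtain ⟨col, hinj, hcol⟩ := Finset.exists_injOn_fin_of_card_eq hcard (a := s(a, b))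
    (Finset.mem_erase.mpr ⟨by simp [hac.symm, had.symm], hT_ab⟩)
  refine ⟨col, IsCFCColoring.mono hTG (.of_injOn_diff hT.connected (e := s(a, b))
    (f := s(c, d)) (by simpa using hT_ab) hdisj (by simpa using hinj) (hcol _ (by simp)))⟩

theorem isStar_of_forall_adj_eq {a : V} (hnbr : ∀ v, ∃ w, G.Adj v w)
    (ha : ∀ x y, G.Adj x y → x = a ∨ y = a) : G.IsStar := by
  refine ⟨a, fun x y => ⟨fun hxy => ⟨hxy.ne, ha x y hxy⟩, ?_⟩⟩
  rintro ⟨hxy, rfl | rfl⟩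
  · obtain ⟨z, hyz⟩ := hnbr y
    obtain h | rfl := ha y z hyz
    · exact absurd h.symm hxy
    · exact hyz.symm
  · obtain ⟨z, hxz⟩ := hnbr x
    obtain h | rfl := ha x z hxz
    · exact absurd h hxy
    · exact hxz

theorem exists_adj_ne_of_edges_meet
    (hmeet : ∀ a b c d, G.Adj a b → G.Adj c d → a = c ∨ a = d ∨ b = c ∨ b = d)
    {a b : V} (hab : G.Adj a b) (ha : ¬ ∀ x y, G.Adj x y → x = a ∨ y = a) :
    ∃ c, c ≠ a ∧ G.Adj b c := by
  push Not at ha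
  obtain ⟨x, y, hxy, hxa, hya⟩ := ha
  rcases hmeet a b x y hab hxy with rfl | rfl | rfl | rfl
  · exact absurd rfl hxa
  · exact absurd rfl hya
  · exact ⟨y, hya, hxy⟩
  · exact ⟨x, hxa, hxy.symm⟩

theorem Preconnected.isStar_or_triangle_of_edges_meet [Fintype V] [Nontrivial V]
    (hG : G.Preconnected)
    (hmeet : ∀ a b c d, G.Adj a b → G.Adj c d → a = c ∨ a = d ∨ b = c ∨ b = d) :
    G.IsStar ∨ (G = ⊤ ∧ Fintype.card V = 3) := by
  have hnbr := hG.exists_adj_of_nontrivial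
  obtain ⟨a⟩ := (inferInstance : Nonempty V)
  obtain ⟨b, hab⟩ := hnbr a
  by_cases ha : ∀ x y, G.Adj x y → x = a ∨ y = a
  · exact .inl (isStar_of_forall_adj_eq hnbr ha)
  by_cases hb : ∀ x y, G.Adj x y → x = b ∨ y = b
  · exact .inl (isStar_of_forall_adj_eq hnbr hb)
  obtain ⟨c, hca, hbc⟩ := exists_adj_ne_of_edges_meet hmeet hab ha
  obtain ⟨c', hc'b, hac'⟩ := exists_adj_ne_of_edges_meet hmeet hab.symm hb
  obtain rfl : c = c' := by
    rcases hmeet b c a c' hbc hac' with h | h | h | h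
    · exact absurd h hab.ne'
    · exact absurd h.symm hc'b
    · exact absurd h hca
    · exact h
  have hmem : ∀ w, w = a ∨ w = b ∨ w = c := by
    intro w
    by_contra! hw
    obtain ⟨z, hwz⟩ := hnbr w
    have := hmeet w z a b hwz hab
    have := hmeet w z b c hwz hbc
    have := hmeet w z a c hwz hac'
    grind
  refine .inr ⟨?_, ?_⟩
  · ext u v
    refine ⟨Adj.ne, fun huv => ?_⟩
    rcases hmem u with rfl | rfl | rfl <;> rcases hmem v with rfl | rfl | rfl <;>
      first | exact absurd rfl huv | assumption | exact Adj.symm (by assumption)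
  · classical
    rw [← Finset.card_univ, Finset.card_eq_three]
    exact ⟨a, b, c, hab.ne, hac'.ne, hbc.ne, by ext w; simpa using hmem w⟩

theorem Connected.exists_isCFCColoring_of_not_isStar [Fintype V] (hG : G.Connected)
    (hn : 2 ≤ Fintype.card V) (hG' : ¬ G.IsStar) :
    ∃ c : Sym2 V → Fin (Fintype.card V - 2), G.IsCFCColoring c := by
  by_cases hdisj : ∃ a b c d, G.Adj a b ∧ G.Adj c d ∧ ∀ x ∈ s(a, b), x ∉ s(c, d)
  · obtain ⟨a, b, c, d, hab, hcd, hdisj⟩ := hdisj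
    exact hG.exists_isCFCColoring_of_disjoint_edges hab hcd hdisj
  have hmeet : ∀ a b c d, G.Adj a b → G.Adj c d → a = c ∨ a = d ∨ b = c ∨ b = d := by
    intro a b c d hab hcd
    by_contra! h
    exact hdisj ⟨a, b, c, d, hab, hcd, by grind⟩
  have : Nontrivial V := Fintype.one_lt_card_iff_nontrivial.mp hn
  obtain hstar | ⟨rfl, hcard⟩ := hG.preconnected.isStar_or_triangle_of_edges_meet hmeet
  · exact absurd hstar hG'
  · rw [hcard]
    exact ⟨fun _ => 0, fun u v huv => (top_adj u v |>.mpr huv).exists_isPath_count_eq_one _⟩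

end SimpleGraph

/-- A connected graph of order `n ≥ 2` has conflict-free connection number `n - 1` if
and only if it is the star `K_{1,n-1}`. -/
theorem stmt_9 {V : Type*} [Fintype V] (G : SimpleGraph V) (hc : G.Connected)
    (hn : 2 ≤ Fintype.card V) : G.cfc = Fintype.card V - 1 ↔ G.IsStar := by
  constructor
  · intro hcfc
    by_contra hG
    obtain ⟨c, hc'⟩ := hc.exists_isCFCColoring_of_not_isStar hn hG
    have := hc'.cfc_le
    omega
  · intro hG
    obtain ⟨r, rfl⟩ := isStar_iff_exists_eq_starGraph.mp hG
    obtain ⟨c, hc'⟩ := exists_isCFCColoring_starGraph r hn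
    exact le_antisymm hc'.cfc_le
      (le_csInf ⟨_, c, hc'⟩ fun _ ⟨_, hk⟩ => card_sub_one_le_of_isCFCColoring_starGraph hk)
end

section
/- For every integer n ≥ 4, the conflict-free connection number of the cycle C_n on n vertices equals 2. -/
open SimpleGraph

/-!
With a single colour every conflict-free path has length one, so a graph with two distinct
non-adjacent vertices needs at least two colours. For the cycle two colours suffice: give one
edge `e` its own colour. Any two vertices are joined by a path through `e` (go around the cycle
the way that crosses `e`), and a path uses `e` exactly once.
-/

namespace SimpleGraph

variable {V : Type*} {G : SimpleGraph V}

theorem IsCFCColoring.two_le {k : ℕ} {c : Sym2 V → Fin k} (hc : G.IsCFCColoring c) {u v : V}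
    (huv : u ≠ v) (hadj : ¬G.Adj u v) : 2 ≤ k := by
  obtain ⟨p, -, col, hcol⟩ := hc u v huv
  by_contra! hk
  have : Subsingleton (Fin k) := Fin.subsingleton_iff_le_one.mpr (by omega)
  have hlen : (p.edges.map c).count col = p.length := by
    rw [List.count_eq_length.mpr fun _ _ => Subsingleton.elim _ _, List.length_map,
      Walk.length_edges]
  exact hadj (Walk.adj_of_length_eq_one (hlen ▸ hcol))

theorem cfc_eq_two {c : Sym2 V → Fin 2} (hc : G.IsCFCColoring c) {u v : V} (huv : u ≠ v)
    (hadj : ¬G.Adj u v) : G.cfc = 2 :=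
  le_antisymm (Nat.sInf_le ⟨c, hc⟩)
    (le_csInf ⟨2, c, hc⟩ fun _ ⟨_, hc'⟩ => hc'.two_le huv hadj)

def singleEdgeColoring [DecidableEq V] (e : Sym2 V) : Sym2 V → Fin 2 :=
  fun x => if x = e then 0 else 1

theorem isCFCColoring_singleEdgeColoring [DecidableEq V] {e : Sym2 V}
    (h : ∀ u v, u ≠ v → ∃ p : G.Walk u v, p.IsPath ∧ e ∈ p.edges) :
    G.IsCFCColoring (singleEdgeColoring e) := by
  intro u v huv
  obtain ⟨p, hp, he⟩ := h u v huv
  refine ⟨p, hp, 0, ?_⟩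
  have hcount : (p.edges.map (singleEdgeColoring e)).count 0 = p.edges.count e := by
    simp only [List.count, List.countP_map]
    congr 1
    ext x
    by_cases hx : x = e <;> simp [singleEdgeColoring, hx]
  rw [hcount, List.count_eq_one_of_mem hp.isTrail.edges_nodup he]

theorem pathGraph.exists_isPath_support_subset {n : ℕ} {i j : Fin n} (hij : i ≤ j) :
    ∃ p : (pathGraph n).Walk i j, p.IsPath ∧ ∀ x ∈ p.support, i ≤ x ∧ x ≤ j := by
  obtain ⟨d, hd⟩ := Nat.exists_eq_add_of_le (Fin.le_iff_val_le_val.mp hij)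
  induction d generalizing j with
  | zero =>
    obtain rfl : j = i := Fin.ext hd
    exact ⟨Walk.nil, Walk.IsPath.nil, by simp⟩
  | succ d ih =>
    let j' : Fin n := ⟨i + d, by omega⟩
    obtain ⟨p, hp, hsupp⟩ := ih (j := j') (by simp [j', Fin.le_def]) rfl
    have hadj : (pathGraph n).Adj j' j := pathGraph_adj.mpr (Or.inl (by simp [j', hd]; omega))
    refine ⟨p.concat hadj, hp.concat (fun hj => ?_) hadj, fun x hx => ?_⟩
    · have := hsupp j hj
      simp only [Fin.le_def, j'] at this
      omega
    · rw [Walk.support_concat, List.mem_append, List.mem_singleton] at hx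
      rcases hx with hx | rfl
      · have := hsupp x hx
        simp only [Fin.le_def, j'] at this ⊢
        omega
      · exact ⟨hij, le_rfl⟩

theorem cycleGraph.adj_zero_last (m : ℕ) : (cycleGraph (m + 2)).Adj 0 (Fin.last (m + 1)) := by
  simp [cycleGraph_adj]

theorem cycleGraph.exists_isPath_mem_edges {m : ℕ} {u v : Fin (m + 2)} (huv : u ≠ v) :
    ∃ p : (cycleGraph (m + 2)).Walk u v, p.IsPath ∧ s(0, Fin.last (m + 1)) ∈ p.edges := by
  wlog hlt : v < u generalizing u v
  · obtain ⟨p, hp, he⟩ := this huv.symm (lt_of_le_of_ne (not_lt.mp hlt) huv)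
    exact ⟨p.reverse, hp.reverse, by simpa using he⟩
  obtain ⟨p, hp, hpsupp⟩ := pathGraph.exists_isPath_support_subset (Fin.le_last u)
  obtain ⟨q, hq, hqsupp⟩ := pathGraph.exists_isPath_support_subset (Fin.zero_le v)
  refine ⟨(p.mapLe pathGraph_le_cycleGraph).append
    (Walk.cons (cycleGraph.adj_zero_last m).symm (q.mapLe pathGraph_le_cycleGraph)), ?_, by simp⟩
  rw [Walk.isPath_def, Walk.support_append, Walk.support_cons, List.tail_cons,
    Walk.support_mapLe_eq_support, Walk.support_mapLe_eq_support, List.nodup_append]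
  refine ⟨hp.support_nodup, hq.support_nodup, fun x hx y hy hxy => ?_⟩
  subst hxy
  exact absurd (hlt.trans_le (hpsupp x hx).1) (not_lt.mpr (hqsupp x hy).2)

theorem cycleGraph.not_adj_zero_two (m : ℕ) : ¬(cycleGraph (m + 4)).Adj 0 2 := by
  rw [cycleGraph_adj', zero_sub, sub_zero, Fin.val_neg']
  simp [Nat.mod_eq_of_lt]

end SimpleGraph

/-- For `n ≥ 4`, the conflict-free connection number of the cycle on `n` vertices is 2. -/
theorem stmt_11 (n : ℕ) (hn : 4 ≤ n) : (cycleGraph n).cfc = 2 := by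
  obtain ⟨m, rfl⟩ := Nat.exists_eq_add_of_le' hn
  exact cfc_eq_two
    (isCFCColoring_singleEdgeColoring fun _ _ => cycleGraph.exists_isPath_mem_edges (m := m + 2))
    (by simp [Fin.ext_iff, Nat.mod_eq_of_lt]) (cycleGraph.not_adj_zero_two m)
end

section
/- Let n and k be integers with n ≥ 2 and k ≥ ⌈log₂ n⌉. Then the minimum number of edges among all connected simple graphs of order n whose conflict-free connection number is at most k equals n−1; that is, every connected graph of order n has at least n−1 edges, and the path P_n is a connected graph of order n with exactly n−1 edges satisfying cfc(P_n) = ⌈log₂ n⌉ ≤ k. -/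
open SimpleGraph

/-! ### Auxiliary lemmas -/

section Aux

variable {n : ℕ}

/-! #### Minimum edge count of connected graphs -/

lemma aux_reach_del {V : Type*} {G : SimpleGraph V} {x y : V}
    (hre : (G \ fromEdgeSet {s(x,y)}).Reachable x y) :
    ∀ {p q : V}, G.Walk p q → (G \ fromEdgeSet {s(x,y)}).Reachable p q := by
  intro p q w
  induction w with
  | nil => exact Reachable.refl _
  | @cons a b d h t ih =>
    refine Reachable.trans ?_ ih
    by_cases he : s(a, b) = s(x, y)
    · rw [Sym2.eq_iff] at he
      rcases he with ⟨rfl, rfl⟩ | ⟨rfl, rfl⟩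
      · exact hre
      · exact hre.symm
    · exact Adj.reachable (by simp only [sdiff_adj, fromEdgeSet_adj]; exact ⟨h, fun hc => he hc.1⟩)

lemma aux_min_edges (n : ℕ) :
    ∀ G : SimpleGraph (Fin n), G.Connected → n - 1 ≤ G.edgeSet.ncard := by
  classical
  suffices h : ∀ m (G : SimpleGraph (Fin n)), G.edgeSet.ncard = m → G.Connected → n - 1 ≤ m by
    intro G hG; exact h _ G rfl hG
  intro m
  induction m using Nat.strong_induction_on with
  | _ m IH =>
    intro G hm hG
    by_cases hac : G.IsAcyclic
    · haveI : Fintype G.edgeSet := (Set.toFinite _).fintype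
      have ht : G.IsTree := ⟨hG, hac⟩
      have h1 := ht.card_edgeFinset
      rw [Set.ncard_eq_toFinset_card'] at hm
      have h2 : G.edgeSet.toFinset = G.edgeFinset := by
        simp [SimpleGraph.edgeFinset]
      rw [h2] at hm
      have hcard : Fintype.card (Fin n) = n := Fintype.card_fin n
      omega
    · rw [SimpleGraph.IsAcyclic] at hac
      push_neg at hac
      obtain ⟨v, c, hc⟩ := hac
      have hne : c.edges ≠ [] := by
        intro h
        have h1 := hc.three_le_length
        have h2 := c.length_edges
        rw [h] at h2
        simp at h2
        omega
      obtain ⟨e, he⟩ := List.exists_mem_of_ne_nil _ hne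
      induction e using Sym2.ind with
      | _ x y =>
        have hkey := (adj_and_reachable_delete_edges_iff_exists_cycle.2 ⟨v, c, hc, he⟩)
        set G' := G \ fromEdgeSet {s(x,y)} with hG'
        have hG'conn : G'.Connected := by
          haveI := hG.nonempty
          exact Connected.mk (fun p q => aux_reach_del hkey.2 (hG.preconnected p q).some)
        have hedge : G'.edgeSet = G.edgeSet \ {s(x,y)} := by
          rw [hG', edgeSet_sdiff, edgeSet_fromEdgeSet, edgeSet_sdiff_sdiff_isDiag]
        have hmem : s(x,y) ∈ G.edgeSet := hkey.1
        have hm1 : 0 < m := by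
          rw [← hm]
          exact Set.ncard_pos (Set.toFinite _) |>.2 ⟨_, hmem⟩
        have hG'card : G'.edgeSet.ncard = m - 1 := by
          rw [hedge, Set.ncard_diff_singleton_of_mem hmem, hm]
        have := IH (m-1) (by omega) G' hG'card hG'conn
        omega

/-! #### Walks in the path graph -/

/-- The canonical edge of the path graph between `j` and `j + 1` (taken mod `n` so that the
definition needs no proofs). -/
def kedge (n : ℕ) [NeZero n] (j : ℕ) : Sym2 (Fin n) :=
  s(⟨j % n, Nat.mod_lt _ (Nat.pos_of_ne_zero (NeZero.ne n))⟩,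
    ⟨(j+1) % n, Nat.mod_lt _ (Nat.pos_of_ne_zero (NeZero.ne n))⟩)

lemma kedge_eq [NeZero n] {j : ℕ} (h : j + 1 < n) {u v : Fin n}
    (hu : u.val = j) (hv : v.val = j + 1) : kedge n j = s(u, v) := by
  unfold kedge
  rw [Sym2.eq_iff]
  left
  constructor <;> apply Fin.ext <;>
    simp [Nat.mod_eq_of_lt h, Nat.mod_eq_of_lt (show j < n by omega), hu, hv]

/-- The monotone walk from `a` to `a + d` in the path graph. -/
def pwalk (n : ℕ) : (d a : ℕ) → (h : a + d < n) →
    (pathGraph n).Walk ⟨a, by omega⟩ ⟨a + d, h⟩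
  | 0, a, h => SimpleGraph.Walk.nil
  | d+1, a, h =>
    SimpleGraph.Walk.cons
      (show (pathGraph n).Adj ⟨a, by omega⟩ ⟨a+1, by omega⟩ by
        rw [pathGraph_adj]; left; rfl)
      ((pwalk n d (a+1) (by omega)).copy rfl (by apply Fin.ext; simp; omega))

lemma pwalk_edges [NeZero n] : ∀ (d a : ℕ) (h : a + d < n),
    (pwalk n d a h).edges = (List.range' a d).map (kedge n)
  | 0, a, h => by
    rw [pwalk]
    simp
  | d+1, a, h => by
    rw [pwalk]
    rw [SimpleGraph.Walk.edges_cons, SimpleGraph.Walk.edges_copy,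
      pwalk_edges d (a+1) (by omega : (a+1) + d < n), List.range'_succ, List.map_cons]
    congr 1
    exact (kedge_eq (show a+1 < n by omega) rfl rfl).symm

lemma pwalk_support_ge : ∀ (d a : ℕ) (h : a + d < n) (w : Fin n),
    w ∈ (pwalk n d a h).support → a ≤ w.val
  | 0, a, h => by
    rw [pwalk]
    intro w hw
    simp [Walk.support_nil] at hw
    simp [hw]
  | d+1, a, h => by
    intro w hw
    rw [pwalk] at hw
    rw [Walk.support_cons, Walk.support_copy] at hw
    rcases List.mem_cons.1 hw with rfl | hw
    · rfl
    · have := pwalk_support_ge d (a+1) (by omega) w hw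
      omega

lemma pwalk_isPath : ∀ (d a : ℕ) (h : a + d < n), (pwalk n d a h).IsPath
  | 0, a, h => by rw [pwalk]; exact Walk.IsPath.nil
  | d+1, a, h => by
    rw [pwalk, SimpleGraph.Walk.cons_isPath_iff]
    constructor
    · rw [Walk.isPath_copy]
      exact pwalk_isPath d (a+1) (by omega)
    · intro hmem
      rw [Walk.support_copy] at hmem
      have := pwalk_support_ge d (a+1) (by omega) _ hmem
      simp at this

lemma aux_cross [NeZero n] {x y : Fin n} (p : (pathGraph n).Walk x y) (j : ℕ)
    (hx : x.val ≤ j) (hy : j < y.val) : kedge n j ∈ p.edges := by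
  induction p with
  | nil => omega
  | @cons a b d h t ih =>
    rw [Walk.edges_cons]
    rw [pathGraph_adj] at h
    by_cases hb : b.val ≤ j
    · exact List.mem_cons_of_mem _ (ih hb hy)
    · have h1 : a.val = j := by omega
      have h2 : b.val = j + 1 := by omega
      exact List.mem_cons.2 (Or.inl (kedge_eq (by omega) h1 h2))

lemma pathGraph_isBridge [NeZero n] {u v : Fin n} (h : (pathGraph n).Adj u v) :
    (pathGraph n).IsBridge s(u, v) := by
  rw [isBridge_iff_adj_and_forall_walk_mem_edges]
  refine fun p => ?_
  rw [pathGraph_adj] at h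
  rcases h with h | h
  · have := aux_cross p u.val (le_refl _) (by omega)
    rwa [kedge_eq (v := v) (by omega) rfl (by omega)] at this
  · have := aux_cross p.reverse v.val (le_refl _) (by omega)
    rw [kedge_eq (v := u) (by omega) rfl (by omega : u.val = v.val + 1)] at this
    rw [Walk.edges_reverse, List.mem_reverse] at this
    rwa [Sym2.eq_swap] at this

lemma pathGraph_isTree (hn : 1 ≤ n) : (pathGraph n).IsTree := by
  haveI : NeZero n := ⟨by omega⟩
  constructor
  · obtain ⟨m, rfl⟩ : ∃ m, n = m + 1 := ⟨n - 1, by omega⟩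
    exact pathGraph_connected m
  · exact isAcyclic_iff_forall_adj_isBridge.2 fun v w h => pathGraph_isBridge h

/-! #### 2-adic valuations -/

lemma two_adic_between {x y : ℕ} (hx : 0 < x) (hxy : x < y)
    (hv : x.factorization 2 = y.factorization 2) :
    ∃ z, x < z ∧ z ≤ y ∧ x.factorization 2 < z.factorization 2 := by
  set m := x.factorization 2 with hm
  have hxe : 2^m * (x / 2^m) = x := Nat.ordProj_mul_ordCompl_eq_self x 2
  have hye : 2^m * (y / 2^m) = y := by
    conv_rhs => rw [← Nat.ordProj_mul_ordCompl_eq_self y 2]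
    rw [← hv]
  have hxodd : ¬ 2 ∣ (x / 2^m) := Nat.not_dvd_ordCompl Nat.prime_two (by omega)
  set c := x / 2^m with hc
  set c' := y / 2^m with hc'
  have hpow : 0 < 2^m := Nat.pow_pos (by omega)
  have hcc : c < c' := by
    by_contra hcc
    push_neg at hcc
    have := Nat.mul_le_mul_left (2^m) hcc
    omega
  have h2 : 2 ∣ c + 1 := by
    rcases Nat.even_or_odd c with he | ho
    · exact absurd he.two_dvd hxodd
    · exact ho.add_one.two_dvd
  obtain ⟨t, ht⟩ := h2
  refine ⟨2^m * (c+1), ?_, ?_, ?_⟩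
  · have : 2^m * c < 2^m * (c+1) := (Nat.mul_lt_mul_left hpow).2 (by omega)
    omega
  · have : 2^m * (c+1) ≤ 2^m * c' := Nat.mul_le_mul_left _ (by omega)
    omega
  · have hz0 : 2^m * (c+1) ≠ 0 := by positivity
    have hdvd : 2^(m+1) ∣ 2^m * (c+1) := by
      rw [ht, pow_succ]
      exact ⟨t, by ring⟩
    have := (Nat.Prime.pow_dvd_iff_le_factorization Nat.prime_two hz0).1 hdvd
    omega

lemma exists_unique_max (a d : ℕ) (hd : 0 < d) :
    ∃ x, (a < x ∧ x ≤ a + d) ∧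
      (∀ y, a < y → y ≤ a + d → y.factorization 2 = x.factorization 2 → y = x) := by
  obtain ⟨x, hx, hmax⟩ := Finset.exists_max_image (Finset.Ioc a (a+d))
    (fun z => z.factorization 2) ⟨a+1, by simp; omega⟩
  rw [Finset.mem_Ioc] at hx
  refine ⟨x, hx, ?_⟩
  intro y hy1 hy2 hvy
  rcases lt_trichotomy y x with h | h | h
  · obtain ⟨z, hz1, hz2, hz3⟩ := two_adic_between (by omega) h hvy
    have := hmax z (Finset.mem_Ioc.2 ⟨by omega, by omega⟩)
    omega
  · exact h
  · obtain ⟨z, hz1, hz2, hz3⟩ := two_adic_between (by omega) h hvy.symm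
    have := hmax z (Finset.mem_Ioc.2 ⟨by omega, by omega⟩)
    omega

lemma v2_lt_clog {x n : ℕ} (hx : 0 < x) (hxn : x < n) :
    x.factorization 2 < Nat.clog 2 n := by
  have h1 : 2 ^ x.factorization 2 ≤ x := Nat.ordProj_le 2 (by omega)
  have h2 : n ≤ 2 ^ Nat.clog 2 n := Nat.le_pow_clog one_lt_two n
  have : 2 ^ x.factorization 2 < 2 ^ Nat.clog 2 n := by omega
  exact (Nat.pow_lt_pow_iff_right one_lt_two).1 this

/-! #### Counting lemmas -/

lemma count_one_of_unique {β : Type*} [DecidableEq β] (l : List ℕ) (hnd : l.Nodup)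
    (g : ℕ → β) (j : ℕ) (hj : j ∈ l) (huniq : ∀ j' ∈ l, g j' = g j → j' = j) :
    (l.map g).count (g j) = 1 := by
  rw [List.count_eq_countP, List.countP_map]
  have h1 : List.countP ((fun x => x == g j) ∘ g) l = List.countP (· == j) l := by
    apply List.countP_congr
    intro x hx
    simp only [Function.comp, beq_iff_eq]
    exact ⟨fun h => huniq x hx h, fun h => by rw [h]⟩
  rw [h1, ← List.count_eq_countP]
  have h2 := (List.nodup_iff_count_le_one.1 hnd) j
  have h3 := List.count_pos_iff.2 hj
  omega

lemma count_one_exists {β : Type*} [DecidableEq β] (l : List ℕ) (g : ℕ → β) (col : β)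
    (h : (l.map g).count col = 1) :
    ∃ j ∈ l, g j = col ∧ ∀ j' ∈ l, g j' = col → j' = j := by
  rw [List.count_eq_countP, List.countP_map, List.countP_eq_length_filter] at h
  obtain ⟨j, hj⟩ := List.length_eq_one_iff.1 h
  have hjm : j ∈ List.filter ((fun x => x == col) ∘ g) l := by
    rw [hj]; exact List.mem_cons_self
  rw [List.mem_filter] at hjm
  simp only [Function.comp, beq_iff_eq] at hjm
  refine ⟨j, hjm.1, hjm.2, ?_⟩
  intro j' hj' hcol
  have : j' ∈ List.filter ((fun x => x == col) ∘ g) l := by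
    rw [List.mem_filter]
    simp only [Function.comp, beq_iff_eq]
    exact ⟨hj', hcol⟩
  rw [hj] at this
  simpa using this

lemma list_bound (k' : ℕ) : ∀ (m : ℕ) (s : Finset (Fin k')) (f : ℕ → Fin k'),
    s.card ≤ m → ∀ (a d : ℕ), (∀ j, a ≤ j → j < a + d → f j ∈ s) →
    (∀ a' d', 0 < d' → a ≤ a' → a' + d' ≤ a + d →
      ∃ col, ((List.range' a' d').map f).count col = 1) →
    d ≤ 2 ^ s.card - 1 := by
  intro m
  induction m with
  | zero =>
    intro s f hcard a d hmem _
    rcases Nat.eq_zero_or_pos d with rfl | hd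
    · simp
    · have h1 : f a ∈ s := hmem a (le_refl _) (by omega)
      have : s = ∅ := Finset.card_eq_zero.1 (by omega)
      rw [this] at h1
      exact absurd h1 (Finset.notMem_empty _)
  | succ m IH =>
    intro s f hcard a d hmem hcnt
    rcases Nat.eq_zero_or_pos d with rfl | hd
    · simp
    · obtain ⟨col, hcol⟩ := hcnt a d hd (le_refl _) (le_refl _)
      obtain ⟨j, hjl, hjcol, hjuniq⟩ := count_one_exists _ f col hcol
      rw [List.mem_range'] at hjl
      obtain ⟨i, hi, rfl⟩ := hjl
      set j := a + 1 * i with hj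
      have hjrange : a ≤ j ∧ j < a + d := by omega
      have hcols : col ∈ s := hjcol ▸ hmem j hjrange.1 hjrange.2
      classical
      set s' := s.erase col with hs'
      have hcard' : s'.card ≤ m := by
        rw [hs', Finset.card_erase_of_mem hcols]
        have := Finset.card_pos.2 ⟨col, hcols⟩
        omega
      have hscard : s.card = s'.card + 1 := by
        rw [hs', Finset.card_erase_of_mem hcols]
        have := Finset.card_pos.2 ⟨col, hcols⟩
        omega
      have hsub1 : j - a ≤ 2 ^ s'.card - 1 := by
        apply IH s' f hcard' a (j - a)
        · intro j'' h1 h2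
          rw [hs', Finset.mem_erase]
          refine ⟨?_, hmem j'' h1 (by omega)⟩
          intro hc
          have := hjuniq j'' (List.mem_range'.2 ⟨j'' - a, by omega, by omega⟩) hc
          omega
        · intro a' d' h1 h2 h3
          exact hcnt a' d' h1 h2 (by omega)
      have hsub2 : a + d - j - 1 ≤ 2 ^ s'.card - 1 := by
        apply IH s' f hcard' (j+1) (a + d - j - 1)
        · intro j'' h1 h2
          rw [hs', Finset.mem_erase]
          refine ⟨?_, hmem j'' (by omega) (by omega)⟩
          intro hc
          have := hjuniq j'' (List.mem_range'.2 ⟨j'' - a, by omega, by omega⟩) hc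
          omega
        · intro a' d' h1 h2 h3
          exact hcnt a' d' h1 (by omega) (by omega)
      have hpow : 1 ≤ 2 ^ s'.card := Nat.one_le_two_pow
      have : (2:ℕ) ^ s.card = 2 * 2 ^ s'.card := by
        rw [hscard, pow_succ]
        ring
      omega

/-! #### The coloring of the path graph -/

/-- Color of edge index `j` : the 2-adic valuation of `j + 1`, reduced mod `K`. -/
def gcol (K : ℕ) (hK : 0 < K) (j : ℕ) : Fin K :=
  ⟨(j+1).factorization 2 % K, Nat.mod_lt _ hK⟩

/-- The minimum of the two values of an unordered pair. -/
def minS {n : ℕ} : Sym2 (Fin n) → ℕ :=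
  Sym2.lift ⟨fun u v => min u.val v.val, fun u v => by simp [min_comm]⟩

/-- The conflict-free coloring of the path graph. -/
def pcol (n K : ℕ) (hK : 0 < K) : Sym2 (Fin n) → Fin K :=
  fun e => gcol K hK (minS e)

lemma pcol_kedge [NeZero n] {K : ℕ} (hK : 0 < K) {j : ℕ} (h : j + 1 < n) :
    pcol n K hK (kedge n j) = gcol K hK j := by
  unfold pcol kedge minS
  rw [Sym2.lift_mk]
  congr 1
  simp only
  rw [Nat.mod_eq_of_lt h, Nat.mod_eq_of_lt (show j < n by omega)]
  omega

lemma upper_half {n : ℕ} (hn : 2 ≤ n) (u v : Fin n) (hlt : u.val < v.val) :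
    ∃ p : (pathGraph n).Walk u v, p.IsPath ∧
      ∃ col : Fin (Nat.clog 2 n),
        (p.edges.map (pcol n (Nat.clog 2 n) (Nat.clog_pos one_lt_two hn))).count col = 1 := by
  haveI : NeZero n := ⟨by omega⟩
  set K := Nat.clog 2 n with hKdef
  have hK : 0 < K := Nat.clog_pos one_lt_two hn
  have h : u.val + (v.val - u.val) < n := by omega
  refine ⟨(pwalk n (v.val - u.val) u.val h).copy (Fin.ext rfl) (Fin.ext (by simp; omega)),
    (Walk.isPath_copy _ _ _).2 (pwalk_isPath _ _ _), ?_⟩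
  rw [Walk.edges_copy, pwalk_edges, List.map_map]
  have hmapeq : (List.range' u.val (v.val - u.val)).map
      ((pcol n K (Nat.clog_pos one_lt_two hn)) ∘ (kedge n)) =
      (List.range' u.val (v.val - u.val)).map (gcol K hK) := by
    apply List.map_congr_left
    intro j hj
    rw [List.mem_range'] at hj
    obtain ⟨i, hi, rfl⟩ := hj
    exact pcol_kedge hK (by omega)
  rw [hmapeq]
  obtain ⟨x, ⟨hx1, hx2⟩, huniq⟩ := exists_unique_max u.val (v.val - u.val) (by omega)
  refine ⟨gcol K hK (x - 1), ?_⟩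
  apply count_one_of_unique _ List.nodup_range' _ (x - 1)
  · exact List.mem_range'.2 ⟨x - 1 - u.val, by omega, by omega⟩
  · intro j' hj' heq
    rw [List.mem_range'] at hj'
    obtain ⟨i, hi, rfl⟩ := hj'
    set j' := u.val + 1 * i with hj'def
    have hval : (j'+1).factorization 2 = ((x-1)+1).factorization 2 := by
      have e1 : (j'+1).factorization 2 < K := v2_lt_clog (by omega) (by omega)
      have e2 : ((x-1)+1).factorization 2 < K := v2_lt_clog (by omega) (by omega)
      have := Fin.val_eq_val .. |>.2 heq
      simp only [gcol] at this
      rw [Nat.mod_eq_of_lt e1, Nat.mod_eq_of_lt e2] at this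
      exact this
    have hxx : (x-1)+1 = x := by omega
    rw [hxx] at hval
    have := huniq (j'+1) (by omega) (by omega) hval
    omega

lemma cfc_pathGraph {n : ℕ} (hn : 2 ≤ n) : (pathGraph n).cfc = Nat.clog 2 n := by
  haveI : NeZero n := ⟨by omega⟩
  have hK : 0 < Nat.clog 2 n := Nat.clog_pos one_lt_two hn
  have hmem : Nat.clog 2 n ∈
      {k | ∃ c : Sym2 (Fin n) → Fin k, (pathGraph n).IsCFCColoring c} := by
    refine ⟨pcol n (Nat.clog 2 n) hK, ?_⟩
    intro u v huv
    rcases Nat.lt_trichotomy u.val v.val with h | h | h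
    · exact upper_half hn u v h
    · exact absurd (Fin.ext h) huv
    · obtain ⟨p, hp, col, hcol⟩ := upper_half hn v u h
      refine ⟨p.reverse, hp.reverse, col, ?_⟩
      rw [Walk.edges_reverse, List.map_reverse, List.count_reverse]
      exact hcol
  refine le_antisymm (Nat.sInf_le hmem) (le_csInf ⟨_, hmem⟩ ?_)
  rintro j ⟨c, hc⟩
  have key : ∀ a' d', 0 < d' → 0 ≤ a' → a' + d' ≤ 0 + (n-1) →
      ∃ col, ((List.range' a' d').map (fun i => c (kedge n i))).count col = 1 := by
    intro a' d' h1 _ h3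
    have hvn : a' + d' < n := by omega
    obtain ⟨p, hp, col, hcol⟩ := hc ⟨a', by omega⟩ ⟨a' + d', hvn⟩
      (by simp only [ne_eq, Fin.mk.injEq]; omega)
    obtain ⟨q, hq, huniq⟩ := (pathGraph_isTree (by omega : 1 ≤ n)).existsUnique_path
      ⟨a', by omega⟩ ⟨a' + d', hvn⟩
    have h1' := huniq p hp
    have h2' := huniq (pwalk n d' a' hvn) (pwalk_isPath _ _ _)
    rw [h1'.trans h2'.symm, pwalk_edges, List.map_map] at hcol
    exact ⟨col, hcol⟩
  have hlb := list_bound j j Finset.univ (fun i => c (kedge n i))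
    (by simp) 0 (n-1) (fun _ _ _ => Finset.mem_univ _) key
  rw [Finset.card_univ, Fintype.card_fin] at hlb
  have h2 : n ≤ 2^j := by
    have := Nat.one_le_two_pow (n := j)
    omega
  exact (Nat.clog_le_iff_le_pow one_lt_two).2 h2

lemma pathGraph_edge_count {n : ℕ} (hn : 1 ≤ n) : (pathGraph n).edgeSet.ncard = n - 1 := by
  classical
  haveI : Fintype (pathGraph n).edgeSet := (Set.toFinite _).fintype
  have h1 := (pathGraph_isTree hn).card_edgeFinset
  rw [Set.ncard_eq_toFinset_card']
  have h2 : (pathGraph n).edgeSet.toFinset = (pathGraph n).edgeFinset := by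
    simp [SimpleGraph.edgeFinset]
  rw [h2]
  have hcard : Fintype.card (Fin n) = n := Fintype.card_fin n
  omega

end Aux

/-- For `n ≥ 2` and `k ≥ ⌈log₂ n⌉`, the minimum number of edges among connected graphs of
order `n` with conflict-free connection number at most `k` is `n - 1`: every connected
graph of order `n` has at least `n - 1` edges, and the path `P_n` has exactly `n - 1`
edges and satisfies `cfc(P_n) = ⌈log₂ n⌉ ≤ k`. -/
theorem stmt_13 (n k : ℕ) (hn : 2 ≤ n) (hk : Nat.clog 2 n ≤ k) :
    (∀ G : SimpleGraph (Fin n), G.Connected → n - 1 ≤ G.edgeSet.ncard) ∧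
    (pathGraph n).Connected ∧ (pathGraph n).edgeSet.ncard = n - 1 ∧
    (pathGraph n).cfc = Nat.clog 2 n ∧ Nat.clog 2 n ≤ k := by
  refine ⟨aux_min_edges n, ?_, pathGraph_edge_count (by omega), cfc_pathGraph hn, hk⟩
  exact (pathGraph_isTree (by omega : 1 ≤ n)).isConnected
end
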